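/- Let p ∈ (1,∞) and p' = p/(p−1). There exist constants K, K' depending only on p (uniform in the shift a ≥ 0 and in δ ≥ 0) such that for all a ≥ 0, δ ≥ 0 and t ≥ 0 one has φ_a(2t) ≤ K·φ_a(t) and (φ_a)*(2t) ≤ K'·(φ_a)*(t), with K ≤ c·2^{max{2,p}} and K' ≤ c·2^{max{2,p'}}; i.e., the families {φ_a}_{a ≥ 0} and {(φ_a)*}_{a ≥ 0} satisfy the Δ₂-condition uniformly in a ≥ 0. -/

import Mathlib

/-- The derivative `φ'(t) = (δ+t)^(p-2)·t` of the N-function `φ = φ_{p,δ}`. -/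
noncomputable def phiDeriv (p δ t : ℝ) : ℝ := (δ + t) ^ (p - 2) * t

/-- The shifted N-function `φ_a(t) = ∫₀ᵗ φ'(a+s)·s/(a+s) ds`. -/
noncomputable def phiShift (p δ a t : ℝ) : ℝ :=
  ∫ s in (0:ℝ)..t, phiDeriv p δ (a + s) * s / (a + s)

/-- The convex conjugate of an N-function: `ψ*(s) = sup_{t ≥ 0} (s·t − ψ(t))`. -/
noncomputable def conjFun (ψ : ℝ → ℝ) (s : ℝ) : ℝ :=
  sSup ((fun t => s * t - ψ t) '' Set.Ici 0)

/-!
After the substitution `φ'(a+s)·s/(a+s) = φ'_{p,δ+a}(s)`, `φ_a` is the primitive of the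
increasing function `ψ' = φ'_{p,δ+a}`, and for `c ≥ 1` one has
`c^{min(1,p-1)} ψ'(s) ≤ ψ'(c s) ≤ c^{max(1,p-1)} ψ'(s)`.
Integrating the upper bound with `c = 2` gives
`φ_a(2t) ≤ 2·2^{max(1,p-1)} φ_a(t) = 2^{max(2,p)} φ_a(t)`.
Integrating the lower bound with `l = 2^{max(1,1/(p-1))}`, for which `l^{min(1,p-1)} = 2`, gives
`2l·φ_a(u) ≤ φ_a(l u)`, and this superhomogeneity of `φ_a` dualizes to
`(φ_a)*(2t) ≤ 2l·(φ_a)*(t) = 2^{max(2,p')} (φ_a)*(t)`.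
-/

open Set MeasureTheory intervalIntegral

theorem phiShift_eq_integral_phiDeriv (p δ a t : ℝ) :
    phiShift p δ a t = ∫ s in (0:ℝ)..t, phiDeriv p (δ + a) s := by
  refine integral_congr_ae ?_
  filter_upwards [volume.ae_ne (-a)] with s hs _
  have has : a + s ≠ 0 := fun h => hs (by linarith)
  simp only [phiDeriv, add_assoc]
  field_simp

section PhiDeriv

variable {p δ : ℝ}

theorem phiDeriv_zero (p δ : ℝ) : phiDeriv p δ 0 = 0 := mul_zero _

theorem phiDeriv_nonneg (hδ : 0 ≤ δ) {t : ℝ} (ht : 0 ≤ t) : 0 ≤ phiDeriv p δ t :=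
  mul_nonneg (Real.rpow_nonneg (by linarith) _) ht

theorem phiDeriv_monotoneOn (hp : 1 ≤ p) (hδ : 0 ≤ δ) :
    MonotoneOn (phiDeriv p δ) (Ici 0) := by
  intro x hx y hy hxy
  rcases (mem_Ici.mp hx).eq_or_lt with rfl | hx0
  · simpa only [phiDeriv_zero] using phiDeriv_nonneg hδ hy
  have hδx : 0 < δ + x := by linarith
  rcases le_total 2 p with hp2 | hp2
  · exact mul_le_mul (Real.rpow_le_rpow hδx.le (by linarith) (by linarith)) hxy hx0.le
      (Real.rpow_nonneg (by linarith) _)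
  -- for `p < 2`: an increasing minus a decreasing function
  have hsplit : ∀ s, 0 < δ + s →
      phiDeriv p δ s = (δ + s) ^ (p - 1) - δ * (δ + s) ^ (p - 2) := by
    intro s hs
    rw [phiDeriv, show p - 1 = p - 2 + 1 by ring, Real.rpow_add_one hs.ne']
    ring
  rw [hsplit x hδx, hsplit y (by linarith)]
  gcongr ?_ - δ * ?_
  · exact Real.rpow_le_rpow hδx.le (by linarith) (by linarith)
  · exact Real.rpow_le_rpow_of_nonpos hδx (by linarith) (by linarith)

theorem phiDeriv_mul_le (hδ : 0 ≤ δ) {c s : ℝ} (hc : 1 ≤ c) (hs : 0 ≤ s) :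
    phiDeriv p δ (c * s) ≤ c ^ max 1 (p - 1) * phiDeriv p δ s := by
  rcases hs.eq_or_lt with rfl | hs0
  · simp only [mul_zero, phiDeriv_zero, le_refl]
  have hδs : 0 < δ + s := by linarith
  have hδcs : δ + c * s ≤ c * (δ + s) := by nlinarith
  rcases le_total 2 p with hp2 | hp2
  · rw [max_eq_right (by linarith)]
    calc phiDeriv p δ (c * s) = (δ + c * s) ^ (p - 2) * s * c := by rw [phiDeriv]; ring
      _ ≤ (c * (δ + s)) ^ (p - 2) * s * c := by
        gcongr ?_ * s * c
        exact Real.rpow_le_rpow (by positivity) hδcs (by linarith)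
      _ = c ^ (p - 1) * phiDeriv p δ s := by
        rw [Real.mul_rpow (by linarith) hδs.le, show p - 1 = p - 2 + 1 by ring,
          Real.rpow_add_one (by positivity), phiDeriv]
        ring
  · rw [max_eq_left (by linarith), Real.rpow_one]
    calc phiDeriv p δ (c * s) = (δ + c * s) ^ (p - 2) * s * c := by rw [phiDeriv]; ring
      _ ≤ (δ + s) ^ (p - 2) * s * c := by
        gcongr ?_ * s * c
        exact Real.rpow_le_rpow_of_nonpos hδs (by nlinarith) (by linarith)
      _ = c * phiDeriv p δ s := by rw [phiDeriv]; ring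

theorem le_phiDeriv_mul (hδ : 0 ≤ δ) {c s : ℝ} (hc : 1 ≤ c) (hs : 0 ≤ s) :
    c ^ min 1 (p - 1) * phiDeriv p δ s ≤ phiDeriv p δ (c * s) := by
  rcases hs.eq_or_lt with rfl | hs0
  · simp only [mul_zero, phiDeriv_zero, le_refl]
  have hδs : 0 < δ + s := by linarith
  have hδcs : δ + c * s ≤ c * (δ + s) := by nlinarith
  rcases le_total 2 p with hp2 | hp2
  · rw [min_eq_left (by linarith), Real.rpow_one]
    calc c * phiDeriv p δ s = (δ + s) ^ (p - 2) * s * c := by rw [phiDeriv]; ring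
      _ ≤ (δ + c * s) ^ (p - 2) * s * c := by
        gcongr ?_ * s * c
        exact Real.rpow_le_rpow hδs.le (by nlinarith) (by linarith)
      _ = phiDeriv p δ (c * s) := by rw [phiDeriv]; ring
  · rw [min_eq_right (by linarith)]
    calc c ^ (p - 1) * phiDeriv p δ s = (c * (δ + s)) ^ (p - 2) * s * c := by
          rw [Real.mul_rpow (by linarith) hδs.le, show p - 1 = p - 2 + 1 by ring,
            Real.rpow_add_one (by positivity), phiDeriv]
          ring
      _ ≤ (δ + c * s) ^ (p - 2) * s * c := by
        gcongr ?_ * s * c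
        exact Real.rpow_le_rpow_of_nonpos (by positivity) hδcs (by linarith)
      _ = phiDeriv p δ (c * s) := by rw [phiDeriv]; ring

end PhiDeriv

theorem intervalIntegrable_of_monotoneOn_Ici {f : ℝ → ℝ} (hf : MonotoneOn f (Ici 0)) {t : ℝ}
    (ht : 0 ≤ t) : IntervalIntegrable f volume 0 t :=
  (hf.mono (by rw [uIcc_of_le ht]; exact Icc_subset_Ici_self)).intervalIntegrable

theorem MonotoneOn.comp_const_mul_Ici {f : ℝ → ℝ} (hf : MonotoneOn f (Ici 0)) {c : ℝ}
    (hc : 0 ≤ c) : MonotoneOn (fun x => f (c * x)) (Ici 0) :=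
  fun _ hx _ hy hxy =>
    hf (mul_nonneg hc hx) (mul_nonneg hc hy) (mul_le_mul_of_nonneg_left hxy hc)

section Rescaling

variable {f : ℝ → ℝ} {c C t : ℝ}

theorem integral_zero_mul_le_of_le (hf : MonotoneOn f (Ici 0)) (hc : 0 ≤ c) (ht : 0 ≤ t)
    (h : ∀ x ∈ Icc 0 t, f (c * x) ≤ C * f x) :
    ∫ s in (0:ℝ)..c * t, f s ≤ c * C * ∫ s in (0:ℝ)..t, f s := by
  calc ∫ s in (0:ℝ)..c * t, f s = c * ∫ x in (0:ℝ)..t, f (c * x) := by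
        simpa only [mul_zero, smul_eq_mul] using
          (smul_integral_comp_mul_left f c (a := 0) (b := t)).symm
    _ ≤ c * ∫ x in (0:ℝ)..t, C * f x := by
        gcongr
        exact integral_mono_on ht
          (intervalIntegrable_of_monotoneOn_Ici (hf.comp_const_mul_Ici hc) ht)
          ((intervalIntegrable_of_monotoneOn_Ici hf ht).const_mul C) h
    _ = c * C * ∫ s in (0:ℝ)..t, f s := by rw [intervalIntegral.integral_const_mul, mul_assoc]

theorem le_integral_zero_mul_of_le (hf : MonotoneOn f (Ici 0)) (hc : 0 ≤ c) (ht : 0 ≤ t)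
    (h : ∀ x ∈ Icc 0 t, C * f x ≤ f (c * x)) :
    c * C * ∫ s in (0:ℝ)..t, f s ≤ ∫ s in (0:ℝ)..c * t, f s := by
  calc c * C * ∫ s in (0:ℝ)..t, f s = c * ∫ x in (0:ℝ)..t, C * f x := by
        rw [intervalIntegral.integral_const_mul, mul_assoc]
    _ ≤ c * ∫ x in (0:ℝ)..t, f (c * x) := by
        gcongr
        exact integral_mono_on ht ((intervalIntegrable_of_monotoneOn_Ici hf ht).const_mul C)
          (intervalIntegrable_of_monotoneOn_Ici (hf.comp_const_mul_Ici hc) ht) h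
    _ = ∫ s in (0:ℝ)..c * t, f s := by
        simpa only [mul_zero, smul_eq_mul] using
          smul_integral_comp_mul_left f c (a := 0) (b := t)

end Rescaling

theorem conjFun_mul_le {ψ : ℝ → ℝ} {c l t : ℝ} (hc : 1 ≤ c) (hl : 0 < l) (ht : 0 ≤ t)
    (hψ : ∀ u, 0 ≤ u → c * l * ψ u ≤ ψ (l * u)) :
    conjFun ψ (c * t) ≤ c * l * conjFun ψ t := by
  unfold conjFun
  by_cases hA : BddAbove ((fun s => t * s - ψ s) '' Ici 0)
  · refine csSup_le (nonempty_Ici.image _) ?_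
    rintro _ ⟨s, hs, rfl⟩
    have hsl : 0 ≤ s / l := div_nonneg hs hl.le
    calc c * t * s - ψ s = c * l * (t * (s / l)) - ψ (l * (s / l)) := by
          rw [mul_div_cancel₀ s hl.ne']; field_simp
      _ ≤ c * l * (t * (s / l) - ψ (s / l)) := by linarith [hψ _ hsl]
      _ ≤ c * l * sSup ((fun s => t * s - ψ s) '' Ici 0) := by
          gcongr
          exact le_csSup hA ⟨s / l, hsl, rfl⟩
  -- an unbounded supremum is `0` in Lean, so unboundedness has to be passed from `t` to `c * t`
  · have hB : ¬ BddAbove ((fun s => c * t * s - ψ s) '' Ici 0) := by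
      rintro ⟨M, hM⟩
      refine hA ⟨M, ?_⟩
      rintro _ ⟨s, hs, rfl⟩
      have hMs := hM ⟨s, hs, rfl⟩
      have hts : 0 ≤ t * s := mul_nonneg ht hs
      simp only at hMs ⊢
      nlinarith
    rw [Real.sSup_of_not_bddAbove hA, Real.sSup_of_not_bddAbove hB, mul_zero]

theorem two_mul_two_rpow_max_one (x : ℝ) : 2 * (2:ℝ) ^ max 1 x = 2 ^ max 2 (1 + x) := by
  rw [show max 2 (1 + x) = 1 + max 1 x by rw [← max_add_add_left]; norm_num,
    Real.rpow_add two_pos, Real.rpow_one]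

theorem max_one_inv_mul_min_one {q : ℝ} (hq : 0 < q) : max 1 q⁻¹ * min 1 q = 1 := by
  rcases le_total q 1 with hq1 | hq1
  · rw [max_eq_right (one_le_inv₀ hq |>.mpr hq1), min_eq_right hq1, inv_mul_cancel₀ hq.ne']
  · rw [max_eq_left (inv_le_one_of_one_le₀ hq1), min_eq_left hq1, one_mul]

/-- For `p ∈ (1,∞)` and `p' = p/(p−1)` there exist constants `K, K'` depending only
on `p` (uniform in the shift `a ≥ 0` and in `δ ≥ 0`), with `K ≤ c·2^{max{2,p}}` and
`K' ≤ c·2^{max{2,p'}}`, such that for all `a ≥ 0`, `δ ≥ 0`, `t ≥ 0`: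
`φ_a(2t) ≤ K·φ_a(t)` and `(φ_a)*(2t) ≤ K'·(φ_a)*(t)`; i.e., the families
`{φ_a}` and `{(φ_a)*}` satisfy the Δ₂-condition uniformly in `a ≥ 0`. -/
theorem phiShift_Delta2_uniform (p : ℝ) (hp : 1 < p) :
    ∃ K K' c : ℝ, 0 < K ∧ 0 < K' ∧ 0 < c ∧
      K ≤ c * 2 ^ (max 2 p) ∧ K' ≤ c * 2 ^ (max 2 (p / (p - 1))) ∧
      ∀ a : ℝ, 0 ≤ a → ∀ δ : ℝ, 0 ≤ δ → ∀ t : ℝ, 0 ≤ t →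
        phiShift p δ a (2 * t) ≤ K * phiShift p δ a t ∧
        conjFun (phiShift p δ a) (2 * t) ≤ K' * conjFun (phiShift p δ a) t := by
  have hp1 : 0 < p - 1 := by linarith
  refine ⟨2 ^ max 2 p, 2 ^ max 2 (p / (p - 1)), 1, by positivity, by positivity, one_pos,
    (one_mul _).ge, (one_mul _).ge, fun a ha δ hδ t ht => ?_⟩
  have hb : 0 ≤ δ + a := by linarith
  have hmono := phiDeriv_monotoneOn hp.le hb
  rw [funext (phiShift_eq_integral_phiDeriv p δ a)]
  constructor
  · have h := integral_zero_mul_le_of_le hmono zero_le_two ht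
      fun x hx => phiDeriv_mul_le hb one_le_two hx.1
    rwa [two_mul_two_rpow_max_one, add_sub_cancel] at h
  · set l : ℝ := 2 ^ max 1 (p - 1)⁻¹
    have hl : 1 ≤ l := Real.one_le_rpow one_le_two (zero_le_one.trans (le_max_left _ _))
    have hl2 : l ^ min 1 (p - 1) = 2 := by
      rw [← Real.rpow_mul zero_le_two, max_one_inv_mul_min_one hp1, Real.rpow_one]
    rw [show p / (p - 1) = 1 + (p - 1)⁻¹ by field_simp; ring, ← two_mul_two_rpow_max_one]
    refine conjFun_mul_le one_le_two (by positivity) ht fun u hu => ?_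
    have h := le_integral_zero_mul_of_le hmono (by positivity) hu
      fun x hx => hl2 ▸ le_phiDeriv_mul hb hl hx.1
    rwa [mul_comm l 2] at h
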